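/- Let a_k(z) = U_{k−1}(2z−1) where U denotes Chebyshev polynomials of the second kind, and let a_k^{(n)} denote the n-th derivative of a_k evaluated at z = 0. Then a_k^{(n)} = (2^n (−1)^{k+n+1} / k) · ∏_{i=0}^{n} (k² − i²)/(2i+1); in particular a_k^{(1)}(0) = (2/3)(−1)^k k(k²−1) and a_k^{(2)}(0) = (4/15)(−1)^{k−1} k(k²−1)(k²−4). -/

import Mathlib

/-!
By the chain rule `a_k^{(n)}(0) = 2^n U_{k-1}^{(n)}(-1)`. Differentiating the Chebyshev equation
`(1 - x²) U_m'' = 3x U_m' - m(m+2) U_m` `n` times and evaluating at `x = -1`, where `1 - x²`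
vanishes, leaves the first-order recurrence
`(2n+3) U_m^{(n+1)}(-1) = -((m+1)² - (n+1)²) U_m^{(n)}(-1)`,
so `U_{k-1}^{(n)}(-1)` is `(-1)^n ∏_{l<n} (k² - (l+1)²)/(2l+3)` times `U_{k-1}(-1) = (-1)^{k+1} k`.
-/

open Polynomial

/-- The functions `a_k(z) = U_{k-1}(2z-1)` (Chebyshev polynomials of the second
kind), arising from the recurrence `a_k = 2(2z-1)a_{k-1} - a_{k-2}`, `a_0 = 0`,
`a_1 = 1`. -/
noncomputable def aCheb (k : ℕ) (z : ℝ) : ℝ :=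
  (Polynomial.Chebyshev.U ℝ ((k : ℤ) - 1)).eval (2 * z - 1)

namespace Polynomial

variable {𝕜 : Type*} [NontriviallyNormedField 𝕜]

theorem iteratedDeriv_eval (p : 𝕜[X]) (n : ℕ) :
    iteratedDeriv n (fun x => p.eval x) = fun x => (derivative^[n] p).eval x := by
  induction n generalizing p with
  | zero => rfl
  | succ n ih =>
    have hd : _root_.deriv (fun x => p.eval x) = fun x => (derivative p).eval x :=
      _root_.funext fun _ => p.deriv
    rw [iteratedDeriv_succ', Function.iterate_succ_apply, hd, ih]

theorem iteratedDeriv_eval_mul_add (p : 𝕜[X]) (a b : 𝕜) (n : ℕ) (x : 𝕜) :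
    iteratedDeriv n (fun z => p.eval (a * z + b)) x =
      a ^ n * (derivative^[n] p).eval (a * x + b) := by
  have hp : ContDiff 𝕜 n (fun y => p.eval (y + b)) :=
    (p.contDiff_aeval n).comp (contDiff_id.add contDiff_const)
  rw [iteratedDeriv_comp_const_mul hp]
  beta_reduce
  rw [iteratedDeriv_comp_add_const n (fun y => p.eval y), iteratedDeriv_eval]

namespace Chebyshev

variable {R : Type*} [CommRing R]

theorem iterate_derivative_U_eval_neg_one_recurrence (m : ℤ) (n : ℕ) :
    (2 * n + 3) * (derivative^[n + 1] (U R m)).eval (-1) =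
      -((m + 1) ^ 2 - (n + 1) ^ 2) * (derivative^[n] (U R m)).eval (-1) := by
  linear_combination one_sub_X_sq_mul_iterate_derivative_U_eval (R := R) m n (-1)

theorem iterate_derivative_U_eval_neg_one (m : ℤ) (n : ℕ) :
    (∏ l ∈ Finset.range n, (2 * l + 3 : R)) * (derivative^[n] (U R m)).eval (-1) =
      (-1) ^ n * (∏ l ∈ Finset.range n, ((m + 1) ^ 2 - (l + 1) ^ 2 : R)) * (U R m).eval (-1) := by
  induction n with
  | zero => simp
  | succ n ih =>
    rw [Finset.prod_range_succ, Finset.prod_range_succ]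
    linear_combination (∏ l ∈ Finset.range n, (2 * l + 3 : R)) *
        iterate_derivative_U_eval_neg_one_recurrence (R := R) m n -
      ((m + 1) ^ 2 - (n + 1) ^ 2 : R) * ih

theorem U_natCast_sub_one_eval_neg_one (k : ℕ) :
    (U R ((k : ℤ) - 1)).eval (-1) = (-1) ^ (k + 1) * k := by
  rw [U_eval_neg_one, Int.negOnePow_sub, Int.negOnePow_one]
  push_cast
  rw [Int.cast_negOnePow_natCast]
  ring

end Chebyshev

end Polynomial

open Polynomial.Chebyshev

theorem aCheb_eq_eval_mul_add (k : ℕ) :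
    aCheb k = fun z => (U ℝ ((k : ℤ) - 1)).eval (2 * z + -1) :=
  funext fun z => by rw [aCheb, sub_eq_add_neg]

theorem iteratedDeriv_aCheb_zero (n k : ℕ) (hk : 1 ≤ k) :
    iteratedDeriv n (aCheb k) 0 =
      2 ^ n * (-1 : ℝ) ^ (k + n + 1) / k *
        ∏ i ∈ Finset.range (n + 1), ((k : ℝ) ^ 2 - (i : ℝ) ^ 2) / (2 * i + 1) := by
  have hk0 : (k : ℝ) ≠ 0 := by positivity
  have hD := iterate_derivative_U_eval_neg_one (R := ℝ) ((k : ℤ) - 1) n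
  simp only [U_natCast_sub_one_eval_neg_one, Int.cast_sub, Int.cast_natCast, Int.cast_one,
    sub_add_cancel] at hD
  have hprod : ∏ i ∈ Finset.range n, ((k : ℝ) ^ 2 - ((i + 1 : ℕ) : ℝ) ^ 2) /
        (2 * ((i + 1 : ℕ) : ℝ) + 1) =
      (∏ l ∈ Finset.range n, ((k : ℝ) ^ 2 - (l + 1) ^ 2)) /
        ∏ l ∈ Finset.range n, (2 * l + 3 : ℝ) := by
    rw [← Finset.prod_div_distrib]
    exact Finset.prod_congr rfl fun i _ => by push_cast; ring_nf
  rw [aCheb_eq_eval_mul_add, iteratedDeriv_eval_mul_add, Finset.prod_range_succ', hprod]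
  simp only [mul_zero, zero_add, Nat.cast_zero]
  field_simp
  linear_combination (k : ℝ) * hD

/-- The `n`-th derivative at `z = 0`:
`a_k^{(n)}(0) = 2^n (-1)^{k+n+1}/k · ∏_{i=0}^{n} (k² - i²)/(2i+1)`; in particular
`a_k^{(1)}(0) = (2/3)(-1)^k k(k²-1)` and `a_k^{(2)}(0) = (4/15)(-1)^{k-1} k(k²-1)(k²-4)`. -/
theorem aCheb_iteratedDeriv_at_zero :
    (∀ (n k : ℕ), 1 ≤ k →
        iteratedDeriv n (aCheb k) 0 =
          2 ^ n * (-1 : ℝ) ^ (k + n + 1) / k *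
            ∏ i ∈ Finset.range (n + 1), ((k : ℝ) ^ 2 - (i : ℝ) ^ 2) / (2 * i + 1)) ∧
      (∀ k : ℕ, 1 ≤ k →
        iteratedDeriv 1 (aCheb k) 0 = 2 / 3 * (-1 : ℝ) ^ k * k * ((k : ℝ) ^ 2 - 1)) ∧
      ∀ k : ℕ, 1 ≤ k →
        iteratedDeriv 2 (aCheb k) 0 =
          4 / 15 * (-1 : ℝ) ^ (k + 1) * k * ((k : ℝ) ^ 2 - 1) * ((k : ℝ) ^ 2 - 4) := by
  refine ⟨iteratedDeriv_aCheb_zero, fun k hk => ?_, fun k hk => ?_⟩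
  · have hk0 : (k : ℝ) ≠ 0 := by positivity
    rw [iteratedDeriv_aCheb_zero 1 k hk, Finset.prod_range_succ, Finset.prod_range_one]
    push_cast
    field_simp
    ring
  · have hk0 : (k : ℝ) ≠ 0 := by positivity
    rw [iteratedDeriv_aCheb_zero 2 k hk, Finset.prod_range_succ, Finset.prod_range_succ,
      Finset.prod_range_one]
    push_cast
    field_simp
    ring
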